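/- arXiv:2111.01837 — 3 statements merged into one kernel-verified Lean document; each statement's English description precedes it below -/
import Mathlib

section
/- In 2-dimensional Minkowski spacetime with light-cone coordinates, the Cauchy development of a causally convex, connected, open subset U ⊆ 𝕄 is the double cone D(U) = pr₊(U) × pr₋(U), where pr± : ℝ² → ℝ are the projections onto the light-cone coordinates. Moreover D(U) is itself causally convex, connected and open, and D(D(U)) = D(U). -/
/-- A (future-directed, inextensible) causal curve in 2d Minkowski spacetime in
light-cone coordinates, parametrized by the time `t = x⁺ + x⁻`: both light-cone
components are nondecreasing and they sum to the parameter. -/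
def IsCausalCurve (c : ℝ → ℝ × ℝ) : Prop :=
  Monotone (fun t => (c t).1) ∧ Monotone (fun t => (c t).2) ∧ ∀ t, (c t).1 + (c t).2 = t

/-- A subset is causally convex if causal curves with endpoints in it stay in it. -/
def CausallyConvex (S : Set (ℝ × ℝ)) : Prop :=
  ∀ c, IsCausalCurve c → ∀ t₀ t₁ t, t₀ ≤ t → t ≤ t₁ → c t₀ ∈ S → c t₁ ∈ S → c t ∈ S

/-- The Cauchy development: points all of whose inextensible causal curves meet `S`. -/
def CauchyDev (S : Set (ℝ × ℝ)) : Set (ℝ × ℝ) :=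
  {p | ∀ c, IsCausalCurve c → (∃ t, c t = p) → ∃ t, c t ∈ S}

/-! A causal curve is a monotone map into `ℝ × ℝ` with the product order, so causal convexity
is order convexity, and a double cone `A ×ˢ B` is its own Cauchy development. A point `p` of
`pr₊(U) × pr₋(U)` shares its first coordinate with some `q ∈ U` and its second with some
`r ∈ U`. Given a causal curve through `p`, either `p` lies between `q` and `r` in the product
order, hence in `U`, or the curve passes on opposite sides of `q` and `r`; then
`z ↦ (c (z.1 + z.2)).1 - z.1`, the `x⁺`-offset of the curve from `z` at equal time, is a
continuous function on the connected set `U` taking both signs, and a zero of it is a point of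
`U` on the curve. -/

open Set

theorem Set.OrdConnected.prod {α β : Type*} [Preorder α] [Preorder β] {s : Set α} {t : Set β}
    (hs : s.OrdConnected) (ht : t.OrdConnected) : (s ×ˢ t).OrdConnected :=
  ⟨fun _ hx _ hy => by
    rw [Icc_prod_eq]
    exact prod_mono (hs.out hx.1 hy.1) (ht.out hx.2 hy.2)⟩

namespace IsCausalCurve

variable {c : ℝ → ℝ × ℝ}

theorem monotone (hc : IsCausalCurve c) : Monotone c :=
  fun _ _ h => Prod.mk_le_mk.2 ⟨hc.1 h, hc.2.1 h⟩

theorem eq_of_fst_eq (hc : IsCausalCurve c) {x : ℝ × ℝ} (h : (c (x.1 + x.2)).1 = x.1) :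
    c (x.1 + x.2) = x :=
  Prod.ext h (by linarith [hc.2.2 (x.1 + x.2)])

theorem time_eq (hc : IsCausalCurve c) {t : ℝ} {p : ℝ × ℝ} (h : c t = p) : t = p.1 + p.2 := by
  rw [← h, hc.2.2]

theorem continuous_fst (hc : IsCausalCurve c) : Continuous fun t => (c t).1 := by
  refine (LipschitzWith.of_le_add fun s t => ?_).continuous
  rcases le_total s t with hst | hts
  · linarith [hc.1 hst, dist_nonneg (x := s) (y := t)]
  · have := hc.2.1 hts
    linarith [hc.2.2 s, hc.2.2 t, Real.dist_eq s t, le_abs_self (s - t)]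

theorem exists_mem_of_isPreconnected (hc : IsCausalCurve c) {U : Set (ℝ × ℝ)}
    (hU : IsPreconnected U) {x y : ℝ × ℝ} (hx : x ∈ U) (hy : y ∈ U)
    (hxc : (c (x.1 + x.2)).1 ≤ x.1) (hyc : y.1 ≤ (c (y.1 + y.2)).1) : ∃ t, c t ∈ U := by
  set f : ℝ × ℝ → ℝ := fun z => (c (z.1 + z.2)).1 - z.1
  have hf : Continuous f :=
    (hc.continuous_fst.comp (_root_.continuous_fst.add continuous_snd)).sub _root_.continuous_fst
  have h0 : (0 : ℝ) ∈ Icc (f x) (f y) := ⟨sub_nonpos.2 hxc, sub_nonneg.2 hyc⟩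
  obtain ⟨z, hzU, hz⟩ := hU.intermediate_value hx hy hf.continuousOn h0
  exact ⟨z.1 + z.2, by rwa [hc.eq_of_fst_eq (by simp only [f] at hz; linarith)]⟩

end IsCausalCurve

theorem isCausalCurve_clamp (a b k : ℝ) :
    IsCausalCurve fun t => (max a (min b (t - k)), t - max a (min b (t - k))) := by
  refine ⟨fun s t hst => ?_, fun s t hst => ?_, fun t => by ring⟩ <;>
  · simp only [max_def, min_def]
    split_ifs <;> linarith

/-- The witness is the broken null line through `q`, `s` and `r`. -/
theorem CausallyConvex.ordConnected {S : Set (ℝ × ℝ)} (hS : CausallyConvex S) :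
    S.OrdConnected := by
  refine ⟨fun q hq r hr s ⟨hqs, hsr⟩ => ?_⟩
  rw [Prod.le_def] at hqs hsr
  have hγ := isCausalCurve_clamp q.1 r.1 s.2
  have hγq := hγ.eq_of_fst_eq (x := q) (max_eq_left (min_le_of_right_le (by linarith)))
  have hγr := hγ.eq_of_fst_eq (x := r) (by
    dsimp only
    rw [min_eq_left (by linarith), max_eq_right (by linarith)])
  have hγs := hγ.eq_of_fst_eq (x := s) (by
    dsimp only
    rw [add_sub_cancel_right, min_eq_right hsr.1, max_eq_right hqs.1])
  rw [← hγs]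
  exact hS _ hγ _ _ _ (by linarith) (by linarith) (hγq ▸ hq) (hγr ▸ hr)

theorem Set.OrdConnected.causallyConvex {S : Set (ℝ × ℝ)} (hS : S.OrdConnected) :
    CausallyConvex S :=
  fun _ hc _ _ _ h₀ h₁ hS₀ hS₁ => hS.out hS₀ hS₁ ⟨hc.monotone h₀, hc.monotone h₁⟩

theorem subset_cauchyDev (S : Set (ℝ × ℝ)) : S ⊆ CauchyDev S :=
  fun _ hp _ _ ⟨t, ht⟩ => ⟨t, ht ▸ hp⟩

theorem cauchyDev_subset_fst_image_prod_snd_image (S : Set (ℝ × ℝ)) :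
    CauchyDev S ⊆ (Prod.fst '' S) ×ˢ (Prod.snd '' S) := by
  intro p hp
  obtain ⟨t, ht⟩ := hp (fun t => (p.1, t - p.1))
    ⟨monotone_const, fun _ _ h => by simpa using h, fun t => by ring⟩ ⟨p.1 + p.2, by simp⟩
  obtain ⟨u, hu⟩ := hp (fun t => (t - p.2, p.2))
    ⟨fun _ _ h => by simpa using h, monotone_const, fun t => by ring⟩ ⟨p.1 + p.2, by simp⟩
  exact ⟨⟨_, ht, rfl⟩, ⟨_, hu, rfl⟩⟩

theorem cauchyDev_prod (A B : Set ℝ) : CauchyDev (A ×ˢ B) = A ×ˢ B :=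
  ((cauchyDev_subset_fst_image_prod_snd_image _).trans
    (prod_mono (fst_image_prod_subset A B) (snd_image_prod_subset A B))).antisymm
    (subset_cauchyDev _)

theorem IsPreconnected.fst_image_prod_snd_image_subset_cauchyDev {U : Set (ℝ × ℝ)}
    (hU : IsPreconnected U) (hcc : U.OrdConnected) :
    (Prod.fst '' U) ×ˢ (Prod.snd '' U) ⊆ CauchyDev U := by
  rintro p ⟨⟨q, hq, hqp⟩, ⟨r, hr, hrp⟩⟩ c hc ⟨t, hct⟩
  obtain rfl := hc.time_eq hct
  have hcq := hc.2.2 (q.1 + q.2)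
  have hcr := hc.2.2 (r.1 + r.2)
  rcases le_total q.2 p.2 with hq₂ | hq₂ <;> rcases le_total r.1 p.1 with hr₁ | hr₁
  · have hq_le := hct ▸ hc.monotone (show q.1 + q.2 ≤ p.1 + p.2 by linarith)
    have hr_le := hct ▸ hc.monotone (show r.1 + r.2 ≤ p.1 + p.2 by linarith)
    rw [Prod.le_def] at hq_le hr_le
    exact hc.exists_mem_of_isPreconnected hU hq hr (by linarith) (by linarith)
  · exact ⟨_, hct ▸ hcc.out hq hr ⟨Prod.mk_le_mk.2 ⟨hqp.le, hq₂⟩, Prod.mk_le_mk.2 ⟨hr₁, hrp.ge⟩⟩⟩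
  · exact ⟨_, hct ▸ hcc.out hr hq ⟨Prod.mk_le_mk.2 ⟨hr₁, hrp.le⟩, Prod.mk_le_mk.2 ⟨hqp.ge, hq₂⟩⟩⟩
  · have hq_ge := hct ▸ hc.monotone (show p.1 + p.2 ≤ q.1 + q.2 by linarith)
    have hr_ge := hct ▸ hc.monotone (show p.1 + p.2 ≤ r.1 + r.2 by linarith)
    rw [Prod.le_def] at hq_ge hr_ge
    exact hc.exists_mem_of_isPreconnected hU hr hq (by linarith) (by linarith)

theorem IsPreconnected.cauchyDev_eq {U : Set (ℝ × ℝ)} (hU : IsPreconnected U)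
    (hcc : CausallyConvex U) : CauchyDev U = (Prod.fst '' U) ×ˢ (Prod.snd '' U) :=
  (cauchyDev_subset_fst_image_prod_snd_image U).antisymm
    (hU.fst_image_prod_snd_image_subset_cauchyDev hcc.ordConnected)

/-- For a causally convex, connected, open subset `U ⊆ 𝕄`, the Cauchy
development is the double cone `D(U) = pr₊(U) × pr₋(U)`; moreover `D(U)` is causally
convex, connected and open, and `D(D(U)) = D(U)`. -/
theorem statement5 (U : Set (ℝ × ℝ)) (hopen : IsOpen U) (hconn : IsConnected U)
    (hcc : CausallyConvex U) :
    CauchyDev U = (Prod.fst '' U) ×ˢ (Prod.snd '' U) ∧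
    CausallyConvex (CauchyDev U) ∧
    IsConnected (CauchyDev U) ∧
    IsOpen (CauchyDev U) ∧
    CauchyDev (CauchyDev U) = CauchyDev U := by
  have hfst : IsConnected (Prod.fst '' U) := hconn.image _ continuous_fst.continuousOn
  have hsnd : IsConnected (Prod.snd '' U) := hconn.image _ continuous_snd.continuousOn
  rw [hconn.isPreconnected.cauchyDev_eq hcc, cauchyDev_prod]
  exact ⟨rfl,
    (hfst.isPreconnected.ordConnected.prod hsnd.isPreconnected.ordConnected).causallyConvex,
    hfst.prod hsnd, (isOpenMap_fst U hopen).prod (isOpenMap_snd U hopen), rfl⟩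
end

section
/- Every smooth function a : 𝕋ⁿ → ℂ on the n-torus 𝕋 = ℝ/ℤ (n ≥ 1) that is invariant under the diagonal action of the group Diff⁺(𝕋) of orientation preserving diffeomorphisms of the circle is constant. -/
open Real Filter Topology

noncomputable def myg : ℝ → ℝ := fun y => y - Real.sin (Real.pi * y) ^ 2 / 8

lemma myg_contDiff : ContDiff ℝ (⊤ : ℕ∞) myg := by
  unfold myg
  exact contDiff_id.sub (((Real.contDiff_sin.comp (contDiff_const.mul contDiff_id)).pow 2).div_const 8)

lemma myg_hasDerivAt (y : ℝ) :
    HasDerivAt myg (1 - 2 * Real.sin (Real.pi * y) * (Real.cos (Real.pi * y) * Real.pi) / 8) y := by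
  have h1 : HasDerivAt (fun t : ℝ => Real.pi * t) Real.pi y := by
    simpa using (hasDerivAt_id y).const_mul Real.pi
  have h2 : HasDerivAt (fun t : ℝ => Real.sin (Real.pi * t)) (Real.cos (Real.pi * y) * Real.pi) y :=
    (Real.hasDerivAt_sin (Real.pi * y)).comp y h1
  have h3 := ((h2.pow 2).div_const 8)
  have h4 := (hasDerivAt_id y).sub h3
  exact h4.congr_deriv (by norm_num)

lemma myg_deriv_pos (y : ℝ) : 0 < 1 - 2 * Real.sin (Real.pi * y) * (Real.cos (Real.pi * y) * Real.pi) / 8 := by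
  have hs : |Real.sin (Real.pi * y)| ≤ 1 := Real.abs_sin_le_one _
  have hc : |Real.cos (Real.pi * y)| ≤ 1 := Real.abs_cos_le_one _
  have hpi : Real.pi < 4 := by linarith [Real.pi_lt_d2]
  have hb : |2 * Real.sin (Real.pi * y) * (Real.cos (Real.pi * y) * Real.pi) / 8| ≤ 2 * 1 * (1 * Real.pi) / 8 := by
    rw [abs_div, abs_mul, abs_mul, abs_mul]
    have hpi0 := Real.pi_pos
    rw [abs_of_nonneg hpi0.le, abs_two]
    simp only [abs_of_nonneg (by norm_num : (0:ℝ) ≤ 8)]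
    gcongr
  have h2 := (abs_le.1 hb).2
  nlinarith [Real.pi_pos]

lemma myg_strictMono : StrictMono myg :=
  strictMono_of_hasDerivAt_pos myg_hasDerivAt myg_deriv_pos

lemma myg_le (y : ℝ) : myg y ≤ y := by
  have : 0 ≤ Real.sin (Real.pi * y) ^ 2 / 8 := by positivity
  simp only [myg]; linarith

lemma myg_ge (y : ℝ) : y - 1/8 ≤ myg y := by
  have h1 : Real.sin (Real.pi * y) ^ 2 ≤ 1 := Real.sin_sq_le_one _
  simp only [myg]; linarith

lemma myg_surjective : Function.Surjective myg := by
  intro z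
  have hc : ContinuousOn myg (Set.Icc (z - 1) (z + 1)) := myg_contDiff.continuous.continuousOn
  have h1 : myg (z - 1) ≤ z := le_trans (myg_le _) (by linarith)
  have h2 : z ≤ myg (z + 1) := le_trans (by linarith) (myg_ge (z + 1))
  obtain ⟨y, _, hy⟩ := intermediate_value_Icc (by linarith : z - 1 ≤ z + 1) hc ⟨h1, h2⟩
  exact ⟨y, hy⟩

lemma myg_int (m : ℤ) : myg m = m := by
  simp [myg, mul_comm Real.pi (m:ℝ), Real.sin_int_mul_pi]

noncomputable def mye : ℝ ≃o ℝ := StrictMono.orderIsoOfSurjective myg myg_strictMono myg_surjective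

noncomputable def myginv : ℝ → ℝ := mye.symm

lemma myginv_left (y : ℝ) : myginv (myg y) = y :=
  StrictMono.orderIsoOfSurjective_symm_apply_self myg myg_strictMono myg_surjective y

lemma myginv_right (y : ℝ) : myg (myginv y) = y := by
  have h : mye (mye.symm y) = y := mye.apply_symm_apply y
  have h2 : mye (mye.symm y) = myg (mye.symm y) := by
    rw [show (mye : ℝ → ℝ) = myg from StrictMono.coe_orderIsoOfSurjective myg myg_strictMono myg_surjective]
  rw [myginv, ← h2, h]

lemma myginv_contDiff : ContDiff ℝ (⊤ : ℕ∞) myginv := by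
  have hcoe : ⇑(mye.toHomeomorph) = myg := by
    ext y; simp [mye, OrderIso.coe_toHomeomorph, StrictMono.coe_orderIsoOfSurjective]
  have := Homeomorph.contDiff_symm_deriv (𝕜 := ℝ) mye.toHomeomorph
    (f' := fun y => 1 - 2 * Real.sin (Real.pi * y) * (Real.cos (Real.pi * y) * Real.pi) / 8)
    (fun y => (myg_deriv_pos y).ne') (fun y => by rw [hcoe]; exact myg_hasDerivAt y)
    (n := (⊤ : ℕ∞)) (by rw [hcoe]; exact myg_contDiff)
  exact this

lemma myg_add_one (y : ℝ) : myg (y + 1) = myg y + 1 := by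
  have : Real.sin (Real.pi * (y + 1)) = -Real.sin (Real.pi * y) := by
    rw [mul_add, mul_one, Real.sin_add_pi]
  simp only [myg, this]
  ring

lemma myg_iter_antitone (t : ℝ) : Antitone (fun k => myg^[k] t) := by
  apply antitone_nat_of_succ_le
  intro k
  rw [Function.iterate_succ_apply']
  exact myg_le _

lemma myg_iter_lb (t : ℝ) (k : ℕ) : (⌊t⌋ : ℝ) ≤ myg^[k] t := by
  induction k with
  | zero => simpa using Int.floor_le t
  | succ k ih =>
    rw [Function.iterate_succ_apply']
    calc (⌊t⌋ : ℝ) = myg ⌊t⌋ := (myg_int _).symm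
    _ ≤ myg (myg^[k] t) := myg_strictMono.monotone ih

lemma myg_iter_tendsto_int (t : ℝ) : ∃ m : ℤ, Tendsto (fun k => myg^[k] t) atTop (𝓝 (m : ℝ)) := by
  have hbdd : BddBelow (Set.range fun k => myg^[k] t) := ⟨(⌊t⌋ : ℝ), by
    rintro _ ⟨k, rfl⟩; exact myg_iter_lb t k⟩
  set L := ⨅ k, myg^[k] t with hL
  have htd : Tendsto (fun k => myg^[k] t) atTop (𝓝 L) :=
    tendsto_atTop_ciInf (myg_iter_antitone t) hbdd
  have hfix : myg L = L := by
    have h1 : Tendsto (fun k => myg (myg^[k] t)) atTop (𝓝 (myg L)) :=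
      (myg_contDiff.continuous.tendsto L).comp htd
    have h2 : Tendsto (fun k => myg (myg^[k] t)) atTop (𝓝 L) := by
      have := htd.comp (tendsto_add_atTop_nat 1)
      refine this.congr fun k => ?_
      simp [Function.comp, Function.iterate_succ_apply']
    exact tendsto_nhds_unique h1 h2
  have hsin : Real.sin (Real.pi * L) = 0 := by
    have : Real.sin (Real.pi * L) ^ 2 / 8 = 0 := by
      have := hfix; simp only [myg] at this; linarith
    have h8 : Real.sin (Real.pi * L) ^ 2 = 0 := by linarith
    exact pow_eq_zero_iff (by norm_num) |>.mp h8
  obtain ⟨m, hm⟩ := Real.sin_eq_zero_iff.mp hsin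
  refine ⟨m, ?_⟩
  have hLm : L = m := by
    have hpi := Real.pi_pos
    have : (m : ℝ) * Real.pi = L * Real.pi := by rw [hm]; ring
    exact (mul_right_cancel₀ hpi.ne' this).symm
  rwa [← hLm]

/-- Every smooth function on the `n`-torus `𝕋ⁿ` (`n ≥ 1`), modeled as a
smooth `ℤⁿ`-periodic function on `ℝⁿ`, which is invariant under the diagonal action of
`Diff⁺(𝕋)` (modeled by lifts `g : ℝ → ℝ` of orientation preserving circle
diffeomorphisms, i.e. smooth strictly increasing diffeomorphisms with
`g(y + 1) = g(y) + 1`), is constant. -/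
theorem statement11 (n : ℕ) (hn : 1 ≤ n) (a : (Fin n → ℝ) → ℂ)
    (hsmooth : ContDiff ℝ (⊤ : ℕ∞) a)
    (hper : ∀ (x : Fin n → ℝ) (k : Fin n → ℤ), a (fun i => x i + (k i : ℝ)) = a x)
    (hinv : ∀ g g' : ℝ → ℝ, ContDiff ℝ (⊤ : ℕ∞) g → ContDiff ℝ (⊤ : ℕ∞) g' → StrictMono g →
      (∀ y, g' (g y) = y) → (∀ y, g (g' y) = y) → (∀ y, g (y + 1) = g y + 1) →
      ∀ x : Fin n → ℝ, a (fun i => g (x i)) = a x) :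
    ∀ x y : Fin n → ℝ, a x = a y := by
  have hstep := hinv myg myginv myg_contDiff myginv_contDiff myg_strictMono
    myginv_left myginv_right myg_add_one
  have key : ∀ x : Fin n → ℝ, a x = a (fun _ => (0:ℝ)) := by
    intro x
    have hlim : ∀ i, ∃ m : ℤ, Tendsto (fun k => myg^[k] (x i)) atTop (𝓝 (m : ℝ)) :=
      fun i => myg_iter_tendsto_int (x i)
    choose m hm using hlim
    have hiter : ∀ k : ℕ, a (fun i => myg^[k] (x i)) = a x := by
      intro k
      induction k with
      | zero => simp
      | succ k ih =>
        have : (fun i => myg^[k+1] (x i)) = fun i => myg (myg^[k] (x i)) := by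
          funext i; rw [Function.iterate_succ_apply']
        rw [this, hstep (fun i => myg^[k] (x i)), ih]
    have htd : Tendsto (fun k => (fun i => myg^[k] (x i))) atTop (𝓝 (fun i => (m i : ℝ))) :=
      tendsto_pi_nhds.2 fun i => hm i
    have h1 : Tendsto (fun k => a (fun i => myg^[k] (x i))) atTop (𝓝 (a (fun i => (m i : ℝ)))) :=
      (hsmooth.continuous.tendsto _).comp htd
    have h2 : Tendsto (fun k => a (fun i => myg^[k] (x i))) atTop (𝓝 (a x)) := by
      simp only [hiter]; exact tendsto_const_nhds
    have hxm : a x = a (fun i => (m i : ℝ)) := tendsto_nhds_unique h2 h1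
    have hper0 := hper (fun _ => (0:ℝ)) m
    simp only [zero_add] at hper0
    rw [hxm, hper0]
  intro x y
  rw [key x, key y]
end

section
/- Let q : 𝕄 → 𝕄/ℤ be the quotient of 2-dimensional Minkowski spacetime by the ℤ-action n·(x⁺,x⁻) = (x⁺+n, x⁻−n). Every orientation and time-orientation preserving conformal diffeomorphism g of the cylinder 𝕄/ℤ is of the form g([x⁺,x⁻]) = [(g⁺(x⁺), g⁻(x⁻))] for a pair (g⁺, g⁻) of orientation preserving diffeomorphisms of the circle 𝕋 = ℝ/ℤ, and this assignment gives a group isomorphism between the conformal automorphism group of the cylinder and Diff⁺(𝕋) × Diff⁺(𝕋). -/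
/-- The 2d Minkowski metric in light-cone coordinates. -/
noncomputable def mink (u v : ℝ × ℝ) : ℝ := (u.1 * v.2 + u.2 * v.1) / 2

/-- A lift to `ℝ` of an orientation preserving diffeomorphism of the circle
`𝕋 = ℝ/ℤ`: a smooth strictly increasing diffeomorphism of `ℝ` commuting with the unit
translation. -/
def IsCircleDiffLift (g : ℝ → ℝ) : Prop :=
  ContDiff ℝ (⊤ : ℕ∞) g ∧ StrictMono g ∧ Function.Bijective g ∧
  (∃ g' : ℝ → ℝ, ContDiff ℝ (⊤ : ℕ∞) g' ∧ (∀ y, g' (g y) = y) ∧ (∀ y, g (g' y) = y)) ∧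
  (∀ y, g (y + 1) = g y + 1)

/-- A lift to `𝕄 = ℝ²` of an orientation and time-orientation preserving conformal
diffeomorphism of the flat cylinder `𝕄/ℤ`: a conformal, orientation and
time-orientation preserving diffeomorphism of `𝕄` equivariant for the deck action
`(x⁺, x⁻) ↦ (x⁺ + 1, x⁻ − 1)`. -/
def IsCylAutLift (F : ℝ × ℝ → ℝ × ℝ) : Prop :=
  ContDiff ℝ (⊤ : ℕ∞) F ∧ Function.Bijective F ∧
  (∃ Fi : ℝ × ℝ → ℝ × ℝ, ContDiff ℝ (⊤ : ℕ∞) Fi ∧ (∀ p, Fi (F p) = p) ∧ (∀ p, F (Fi p) = p)) ∧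
  (∀ p : ℝ × ℝ, F (p.1 + 1, p.2 - 1) = ((F p).1 + 1, (F p).2 - 1)) ∧
  (∃ Ω : ℝ × ℝ → ℝ, (∀ p, 0 < Ω p) ∧
    ∀ p u v, mink (fderiv ℝ F p u) (fderiv ℝ F p v) = Ω p * mink u v) ∧
  (∀ p, 0 < LinearMap.det ((fderiv ℝ F p) : ℝ × ℝ →ₗ[ℝ] ℝ × ℝ)) ∧
  (∀ p (v : ℝ × ℝ), 0 < v.1 → 0 < v.2 → 0 < (fderiv ℝ F p v).1 + (fderiv ℝ F p v).2)

lemma det_eval2 (f : (ℝ × ℝ) →ₗ[ℝ] ℝ × ℝ) :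
    LinearMap.det f = (f (1,0)).1 * (f (0,1)).2 - (f (0,1)).1 * (f (1,0)).2 := by
  rw [← LinearMap.det_toMatrix (Module.Basis.finTwoProd ℝ), Matrix.det_fin_two]
  simp [LinearMap.toMatrix_apply]

section CurveDeriv
variable {F : ℝ × ℝ → ℝ × ℝ}

lemma cd11 (hF : Differentiable ℝ F) (x y : ℝ) : HasDerivAt (fun s => (F (s, y)).1) ((fderiv ℝ F (x, y) (1, 0)).1) x := by
  have h1 : HasDerivAt (fun s : ℝ => (s, y)) ((1 : ℝ), (0 : ℝ)) x :=
    (hasDerivAt_id x).prodMk (hasDerivAt_const x y)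
  have h2 := (hF (x, y)).hasFDerivAt.comp_hasDerivAt x h1
  exact ((ContinuousLinearMap.fst ℝ ℝ ℝ).hasFDerivAt.comp_hasDerivAt x h2 : )

lemma cd12 (hF : Differentiable ℝ F) (x y : ℝ) : HasDerivAt (fun s => (F (s, y)).2) ((fderiv ℝ F (x, y) (1, 0)).2) x := by
  have h1 : HasDerivAt (fun s : ℝ => (s, y)) ((1 : ℝ), (0 : ℝ)) x :=
    (hasDerivAt_id x).prodMk (hasDerivAt_const x y)
  have h2 := (hF (x, y)).hasFDerivAt.comp_hasDerivAt x h1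
  exact ((ContinuousLinearMap.snd ℝ ℝ ℝ).hasFDerivAt.comp_hasDerivAt x h2 : )

lemma cd21 (hF : Differentiable ℝ F) (x y : ℝ) : HasDerivAt (fun s => (F (x, s)).1) ((fderiv ℝ F (x, y) (0, 1)).1) y := by
  have h1 : HasDerivAt (fun s : ℝ => (x, s)) ((0 : ℝ), (1 : ℝ)) y :=
    (hasDerivAt_const y x).prodMk (hasDerivAt_id y)
  have h2 := (hF (x, y)).hasFDerivAt.comp_hasDerivAt y h1
  exact ((ContinuousLinearMap.fst ℝ ℝ ℝ).hasFDerivAt.comp_hasDerivAt y h2 : )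

lemma cd22 (hF : Differentiable ℝ F) (x y : ℝ) : HasDerivAt (fun s => (F (x, s)).2) ((fderiv ℝ F (x, y) (0, 1)).2) y := by
  have h1 : HasDerivAt (fun s : ℝ => (x, s)) ((0 : ℝ), (1 : ℝ)) y :=
    (hasDerivAt_const y x).prodMk (hasDerivAt_id y)
  have h2 := (hF (x, y)).hasFDerivAt.comp_hasDerivAt y h1
  exact ((ContinuousLinearMap.snd ℝ ℝ ℝ).hasFDerivAt.comp_hasDerivAt y h2 : )

end CurveDeriv

lemma lift_deriv_pos {g : ℝ → ℝ} (hg : IsCircleDiffLift g) (x : ℝ) : 0 < deriv g x := by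
  obtain ⟨hsm, hmono, hbij, ⟨gi, gism, gil, gir⟩, hper⟩ := hg
  have hd : HasDerivAt g (deriv g x) x := (hsm.differentiable (by simp) x).hasDerivAt
  have hnonneg : 0 ≤ deriv g x := by
    have ht := hasDerivAt_iff_tendsto_slope.mp hd
    have h2 : Filter.Tendsto (slope g x) (nhdsWithin x (Set.Ioi x)) (nhds (deriv g x)) :=
      ht.mono_left (nhdsWithin_mono x (fun y hy => ne_of_gt hy))
    refine ge_of_tendsto h2 ?_
    filter_upwards [self_mem_nhdsWithin] with y hy
    rw [slope_def_field]
    have h3 : g x < g y := hmono hy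
    have h4 : (0:ℝ) < y - x := sub_pos.mpr (Set.mem_Ioi.mp hy)
    exact div_nonneg (by linarith) (by linarith)
  have hne : deriv g x ≠ 0 := by
    have hcomp : HasDerivAt (fun y => gi (g y)) (deriv gi (g x) * deriv g x) x :=
      (gism.differentiable (by simp) (g x)).hasDerivAt.comp x hd
    have heq : (fun y => gi (g y)) = id := funext gil
    rw [heq] at hcomp
    have h1 : deriv gi (g x) * deriv g x = 1 := by
      have := hcomp.deriv
      simpa using this.symm
    intro h0
    rw [h0, mul_zero] at h1
    exact one_ne_zero h1.symm
  exact lt_of_le_of_ne hnonneg (Ne.symm hne)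

lemma prod_hasFDerivAt {gp gm : ℝ → ℝ} (hgp : Differentiable ℝ gp) (hgm : Differentiable ℝ gm)
    (p : ℝ × ℝ) :
    HasFDerivAt (fun p : ℝ × ℝ => (gp p.1, gm p.2))
      (((((1:ℝ →L[ℝ] ℝ)).smulRight (deriv gp p.1)).comp (ContinuousLinearMap.fst ℝ ℝ ℝ)).prod
        ((((1:ℝ →L[ℝ] ℝ)).smulRight (deriv gm p.2)).comp (ContinuousLinearMap.snd ℝ ℝ ℝ))) p := by
  have h1 : HasFDerivAt (fun q : ℝ × ℝ => gp q.1)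
      ((((1:ℝ →L[ℝ] ℝ)).smulRight (deriv gp p.1)).comp (ContinuousLinearMap.fst ℝ ℝ ℝ)) p :=
    (hgp p.1).hasDerivAt.hasFDerivAt.comp p (ContinuousLinearMap.fst ℝ ℝ ℝ).hasFDerivAt
  have h2 : HasFDerivAt (fun q : ℝ × ℝ => gm q.2)
      ((((1:ℝ →L[ℝ] ℝ)).smulRight (deriv gm p.2)).comp (ContinuousLinearMap.snd ℝ ℝ ℝ)) p :=
    (hgm p.2).hasDerivAt.hasFDerivAt.comp p (ContinuousLinearMap.snd ℝ ℝ ℝ).hasFDerivAt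
  exact h1.prodMk h2

lemma prod_fderiv_eval {gp gm : ℝ → ℝ} (hgp : Differentiable ℝ gp) (hgm : Differentiable ℝ gm)
    (p u : ℝ × ℝ) :
    fderiv ℝ (fun p : ℝ × ℝ => (gp p.1, gm p.2)) p u
      = (u.1 * deriv gp p.1, u.2 * deriv gm p.2) := by
  rw [(prod_hasFDerivAt hgp hgm p).fderiv]
  simp [ContinuousLinearMap.smulRight_apply, smul_eq_mul]

lemma forward_dir {F : ℝ × ℝ → ℝ × ℝ} (hAut : IsCylAutLift F) :
    ∃ gp gm : ℝ → ℝ, IsCircleDiffLift gp ∧ IsCircleDiffLift gm ∧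
      ∀ p : ℝ × ℝ, F p = (gp p.1, gm p.2) := by
  obtain ⟨hsm, hbij, ⟨Fi, hFism, hFil, hFir⟩, hequiv, ⟨Om, hOmpos, hconf⟩, hdet, htime⟩ := hAut
  have hdiff : Differentiable ℝ F := hsm.differentiable (by simp)
  -- pointwise structure of the differential
  have key : ∀ p : ℝ × ℝ, (fderiv ℝ F p (0,1)).1 = 0 ∧ (fderiv ℝ F p (1,0)).2 = 0 ∧
      0 < (fderiv ℝ F p (1,0)).1 ∧ 0 < (fderiv ℝ F p (0,1)).2 := by
    intro p
    set a := (fderiv ℝ F p (1,0)).1 with ha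
    set b := (fderiv ℝ F p (0,1)).1 with hb
    set c := (fderiv ℝ F p (1,0)).2 with hc
    set d := (fderiv ℝ F p (0,1)).2 with hd
    have hac : a * c = 0 := by
      have := hconf p (1,0) (1,0)
      simp only [mink, ← ha, ← hc] at this
      norm_num at this
      linarith [this]
    have hbd : b * d = 0 := by
      have := hconf p (0,1) (0,1)
      simp only [mink, ← hb, ← hd] at this
      norm_num at this
      linarith [this]
    have hsum : a * d + b * c = Om p := by
      have := hconf p (1,0) (0,1)
      simp only [mink, ← ha, ← hb, ← hc, ← hd] at this
      norm_num at this
      linarith [this]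
    have hdet' : 0 < a * d - b * c := by
      have h := hdet p
      rw [det_eval2] at h
      simpa only [ContinuousLinearMap.coe_coe, ← ha, ← hb, ← hc, ← hd] using h
    have had : 0 < a * d := by linarith [hOmpos p]
    have hane : a ≠ 0 := fun h => by rw [h, zero_mul] at had; exact lt_irrefl 0 had
    have hdne : d ≠ 0 := fun h => by rw [h, mul_zero] at had; exact lt_irrefl 0 had
    have hc0 : c = 0 := by
      rcases mul_eq_zero.mp hac with h | h
      · exact absurd h hane
      · exact h
    have hb0 : b = 0 := by
      rcases mul_eq_zero.mp hbd with h | h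
      · exact h
      · exact absurd h hdne
    have htp : 0 < a + d := by
      have h := htime p (1,1) one_pos one_pos
      have h11 : ((1:ℝ),(1:ℝ)) = ((1:ℝ),(0:ℝ)) + ((0:ℝ),(1:ℝ)) := by norm_num
      rw [h11, map_add] at h
      simp only [Prod.fst_add, Prod.snd_add, ← ha, ← hb, ← hc, ← hd] at h
      rw [hb0, hc0] at h
      linarith
    have hapos : 0 < a := by
      rcases mul_pos_iff.mp had with ⟨h1, _⟩ | ⟨h1, h2⟩
      · exact h1
      · linarith
    have hdpos : 0 < d := by
      rcases mul_pos_iff.mp had with ⟨_, h2⟩ | ⟨h1, h2⟩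
      · exact h2
      · linarith
    exact ⟨hb0, hc0, hapos, hdpos⟩
  set gp : ℝ → ℝ := fun x => (F (x, 0)).1 with hgp
  set gm : ℝ → ℝ := fun y => (F (0, y)).2 with hgm
  -- product form
  have hprod : ∀ p : ℝ × ℝ, F p = (gp p.1, gm p.2) := by
    intro ⟨x, y⟩
    have h1 : (F (x, y)).1 = (F (x, 0)).1 := by
      have hdiff1 : Differentiable ℝ (fun s => (F (x, s)).1) :=
        fun s => (cd21 hdiff x s).differentiableAt
      have hzero : ∀ s, deriv (fun s => (F (x, s)).1) s = 0 := fun s => by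
        rw [(cd21 hdiff x s).deriv]; exact (key (x, s)).1
      exact is_const_of_deriv_eq_zero hdiff1 hzero y 0
    have h2 : (F (x, y)).2 = (F (0, y)).2 := by
      have hdiff2 : Differentiable ℝ (fun s => (F (s, y)).2) :=
        fun s => (cd12 hdiff s y).differentiableAt
      have hzero : ∀ s, deriv (fun s => (F (s, y)).2) s = 0 := fun s => by
        rw [(cd12 hdiff s y).deriv]; exact (key (s, y)).2.1
      exact is_const_of_deriv_eq_zero hdiff2 hzero x 0
    exact Prod.ext h1 h2
  refine ⟨gp, gm, ?_, ?_, hprod⟩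
  · -- gp is a circle diff lift
    refine ⟨?_, ?_, ?_, ?_, ?_⟩
    · exact contDiff_fst.comp (hsm.comp (contDiff_id.prodMk contDiff_const))
    · apply strictMono_of_deriv_pos
      intro x
      rw [(cd11 hdiff x 0).deriv]
      exact (key (x, 0)).2.2.1
    · constructor
      · exact (strictMono_of_deriv_pos (f := gp) (fun x => by
          rw [(cd11 hdiff x 0).deriv]; exact (key (x, 0)).2.2.1)).injective
      · intro z
        obtain ⟨p, hp⟩ := hbij.2 (z, gm 0)
        rw [hprod p, Prod.mk.injEq] at hp
        exact ⟨p.1, hp.1⟩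
    · refine ⟨fun z => (Fi (z, gm 0)).1, ?_, ?_, ?_⟩
      · exact contDiff_fst.comp (hFism.comp (contDiff_id.prodMk contDiff_const))
      · intro u
        have h0 : F (u, 0) = (gp u, gm 0) := hprod (u, 0)
        simp only [← h0, hFil]
      · intro z
        have h1 : F (Fi (z, gm 0)) = (z, gm 0) := hFir (z, gm 0)
        rw [hprod (Fi (z, gm 0)), Prod.mk.injEq] at h1
        exact h1.1
    · intro u
      have h := congrArg Prod.fst (hequiv (u, 0))
      have h2 : F (u + 1, (0:ℝ) - 1) = (gp (u + 1), gm ((0:ℝ) - 1)) := hprod (u + 1, (0:ℝ) - 1)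
      rw [show ((u,(0:ℝ)).1 + 1, (u,(0:ℝ)).2 - 1) = (u + 1, (0:ℝ) - 1) from rfl, h2] at h
      exact h
  · -- gm is a circle diff lift
    refine ⟨?_, ?_, ?_, ?_, ?_⟩
    · exact contDiff_snd.comp (hsm.comp (contDiff_const.prodMk contDiff_id))
    · apply strictMono_of_deriv_pos
      intro y
      rw [(cd22 hdiff 0 y).deriv]
      exact (key (0, y)).2.2.2
    · constructor
      · have hmono : StrictMono gm := strictMono_of_deriv_pos (fun y => by
          rw [(cd22 hdiff 0 y).deriv]; exact (key (0, y)).2.2.2)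
        exact hmono.injective
      · intro z
        obtain ⟨p, hp⟩ := hbij.2 (gp 0, z)
        rw [hprod p, Prod.mk.injEq] at hp
        exact ⟨p.2, hp.2⟩
    · refine ⟨fun z => (Fi (gp 0, z)).2, ?_, ?_, ?_⟩
      · exact contDiff_snd.comp (hFism.comp (contDiff_const.prodMk contDiff_id))
      · intro u
        have h0 : F (0, u) = (gp 0, gm u) := hprod (0, u)
        simp only [← h0, hFil]
      · intro z
        have h1 : F (Fi (gp 0, z)) = (gp 0, z) := hFir (gp 0, z)
        rw [hprod (Fi (gp 0, z)), Prod.mk.injEq] at h1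
        exact h1.2
    · intro u
      have h := congrArg Prod.snd (hequiv (0, u + 1))
      simp only [Prod.snd] at h
      -- h : (F (0 + 1, (u+1) - 1)).2 = (F (0, u+1)).2 - 1
      have h2 : (F (1, u)).2 = gm u := by
        have := hprod (1, u); rw [this]
      have h3 : (F (0, u + 1)).2 = gm (u + 1) := rfl
      simp only [add_sub_cancel_right] at h
      rw [zero_add] at h
      rw [h2, h3] at h
      linarith

lemma converse_dir {gp gm : ℝ → ℝ} (hgp : IsCircleDiffLift gp) (hgm : IsCircleDiffLift gm) :
    IsCylAutLift (fun p : ℝ × ℝ => (gp p.1, gm p.2)) := by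
  have hdp := fun x => lift_deriv_pos hgp x
  have hdm := fun x => lift_deriv_pos hgm x
  obtain ⟨hsp, hmp, hbp, ⟨gip, gipsm, gipl, gipr⟩, hperp⟩ := hgp
  obtain ⟨hsms, hmm, hbm, ⟨gim, gimsm, giml, gimr⟩, hperm⟩ := hgm
  have hdiffp : Differentiable ℝ gp := hsp.differentiable (by simp)
  have hdiffm : Differentiable ℝ gm := hsms.differentiable (by simp)
  have heval := prod_fderiv_eval hdiffp hdiffm
  refine ⟨?_, ?_, ?_, ?_, ?_, ?_, ?_⟩
  · exact (hsp.comp contDiff_fst).prodMk (hsms.comp contDiff_snd)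
  · constructor
    · intro p q h
      rw [Prod.mk.injEq] at h
      exact Prod.ext (hbp.1 h.1) (hbm.1 h.2)
    · intro q
      obtain ⟨x, hx⟩ := hbp.2 q.1
      obtain ⟨y, hy⟩ := hbm.2 q.2
      exact ⟨(x, y), by simp [hx, hy]⟩
  · refine ⟨fun q => (gip q.1, gim q.2), ?_, ?_, ?_⟩
    · exact (gipsm.comp contDiff_fst).prodMk (gimsm.comp contDiff_snd)
    · intro p; simp [gipl, giml]
    · intro p; simp [gipr, gimr]
  · intro p
    have h1 : gm (p.2 - 1) = gm p.2 - 1 := by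
      have := hperm (p.2 - 1); rw [sub_add_cancel] at this; linarith
    simp [hperp p.1, h1]
  · refine ⟨fun p => deriv gp p.1 * deriv gm p.2, fun p => mul_pos (hdp p.1) (hdm p.2), ?_⟩
    intro p u v
    rw [heval p u, heval p v]
    simp only [mink]
    ring
  · intro p
    have : (fderiv ℝ (fun p : ℝ × ℝ => (gp p.1, gm p.2)) p : ℝ × ℝ →ₗ[ℝ] ℝ × ℝ)
        = (fderiv ℝ (fun p : ℝ × ℝ => (gp p.1, gm p.2)) p : ℝ × ℝ →ₗ[ℝ] ℝ × ℝ) := rfl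
    rw [det_eval2]
    simp only [ContinuousLinearMap.coe_coe]
    rw [heval p (1,0), heval p (0,1)]
    simp only []
    have := mul_pos (hdp p.1) (hdm p.2)
    simpa using by nlinarith [hdp p.1, hdm p.2]
  · intro p v hv1 hv2
    rw [heval p v]
    exact add_pos (mul_pos hv1 (hdp p.1)) (mul_pos hv2 (hdm p.2))

/-- Every orientation and time-orientation preserving conformal
diffeomorphism of the flat cylinder `𝕄/ℤ` is of the product form
`[x⁺,x⁻] ↦ [(g⁺(x⁺), g⁻(x⁻))]` for a pair of orientation preserving circle
diffeomorphisms; conversely every such pair defines one, and the pair is unique up to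
the deck transformations `(g⁺ + n, g⁻ − n)`, so the conformal automorphism group of
the cylinder is identified with `Diff⁺(𝕋) × Diff⁺(𝕋)`. -/
theorem statement15 :
    (∀ F : ℝ × ℝ → ℝ × ℝ, IsCylAutLift F →
      ∃ gp gm : ℝ → ℝ, IsCircleDiffLift gp ∧ IsCircleDiffLift gm ∧
        ∀ p : ℝ × ℝ, F p = (gp p.1, gm p.2)) ∧
    (∀ gp gm : ℝ → ℝ, IsCircleDiffLift gp → IsCircleDiffLift gm →
      IsCylAutLift (fun p : ℝ × ℝ => (gp p.1, gm p.2))) ∧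
    (∀ gp gm gp' gm' : ℝ → ℝ, IsCircleDiffLift gp → IsCircleDiffLift gm →
      IsCircleDiffLift gp' → IsCircleDiffLift gm' →
      (∀ p : ℝ × ℝ, ∃ m : ℤ, gp' p.1 = gp p.1 + (m : ℝ) ∧ gm' p.2 = gm p.2 - (m : ℝ)) →
      ∃ n : ℤ, (∀ y, gp' y = gp y + (n : ℝ)) ∧ (∀ y, gm' y = gm y - (n : ℝ))) := by
  refine ⟨fun F hF => forward_dir hF, fun gp gm hgp hgm => converse_dir hgp hgm, ?_⟩
  intro gp gm gp' gm' _ _ _ _ h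
  obtain ⟨n, hn1, hn2⟩ := h (0, 0)
  refine ⟨n, ?_, ?_⟩
  · intro y
    obtain ⟨m, hm1, hm2⟩ := h (y, 0)
    have hmn : (m : ℝ) = (n : ℝ) := by
      simp only [] at hm2 hn2
      linarith
    rw [hm1, hmn]
  · intro y
    obtain ⟨m, hm1, hm2⟩ := h (0, y)
    have hmn : (m : ℝ) = (n : ℝ) := by
      simp only [] at hm1 hn1
      linarith
    rw [hm2, hmn]
end
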